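/- arXiv:1904.12801 — 2 statements merged into one kernel-verified Lean document; each statement's English description precedes it below -/
import Mathlib

section
/- Let Q be a finite faithful quandle and let N be a subgroup of Equiv.Perm Q such that N ⊆ Dis(Q), N is normalized by every L c (c ∈ Q), and N is semiregular (every n ∈ N fixing some point of Q is the identity). Then: (1) for all a, b ∈ Q, L b * (L a)⁻¹ ∈ N if and only if there exists n ∈ N with n a = b; and (2) for every a ∈ Q, the map N → N sending n to L (n a) * (L a)⁻¹ is a well-defined bijection of N onto itself (in particular every element of N has the form L b * (L a)⁻¹ for some b ∈ Q). -/
open Quandles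

/-- Left multiplication by `a` as a permutation of the quandle. -/
def QL {Q : Type*} [Quandle Q] (a : Q) : Equiv.Perm Q := Rack.act' a

/-- The displacement group of a quandle: the subgroup of `Equiv.Perm Q`
generated by `{L a * (L b)⁻¹ : a, b ∈ Q}`. -/
def Dis (Q : Type*) [Quandle Q] : Subgroup (Equiv.Perm Q) :=
  Subgroup.closure {g : Equiv.Perm Q | ∃ a b : Q, g = QL a * (QL b)⁻¹}

lemma QL_conj {Q : Type*} [Quandle Q] (a b : Q) :
    QL (a ◃ b) = QL a * QL b * (QL a)⁻¹ := Rack.ad_conj a b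

lemma QL_act {Q : Type*} [Quandle Q] (a b : Q) : QL a b = a ◃ b := rfl

lemma QL_conj_apply {Q : Type*} [Quandle Q] (a : Q) (x : Q) :
    QL (QL a x) = QL a * QL x * (QL a)⁻¹ := QL_conj a x

lemma QL_conj_inv_apply {Q : Type*} [Quandle Q] (a : Q) (x : Q) :
    QL ((QL a)⁻¹ x) = (QL a)⁻¹ * QL x * QL a := by
  have h := QL_conj_apply a ((QL a)⁻¹ x)
  rw [show (QL a) ((QL a)⁻¹ x) = x from Equiv.apply_symm_apply _ _] at h
  rw [h]
  group

/-- Elements of the displacement group act by quandle automorphisms on left translations. -/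
lemma dis_conj {Q : Type*} [Quandle Q] (g : Equiv.Perm Q) (hg : g ∈ Dis Q) (x : Q) :
    QL (g x) = g * QL x * g⁻¹ := by
  induction hg using Subgroup.closure_induction generalizing x with
  | mem g hg =>
    obtain ⟨a, b, rfl⟩ := hg
    have h1 : QL ((QL a * (QL b)⁻¹) x) = QL (QL a ((QL b)⁻¹ x)) := rfl
    rw [h1, QL_conj_apply, QL_conj_inv_apply]
    group
  | one => simp
  | mul g h hg hh ihg ihh =>
    have : (g * h) x = g (h x) := rfl
    rw [this, ihg, ihh]
    group
  | inv g hg ih =>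
    have h := ih (g⁻¹ x)
    rw [show g (g⁻¹ x) = x from Equiv.apply_symm_apply _ _] at h
    rw [h]
    group

theorem stmt6 (Q : Type*) [Quandle Q] [Finite Q]
    (hfaith : Function.Injective (fun a : Q => QL a))
    (N : Subgroup (Equiv.Perm Q)) (hsub : N ≤ Dis Q)
    (hnorm : ∀ c : Q, ∀ n ∈ N, QL c * n * (QL c)⁻¹ ∈ N)
    (hsemireg : ∀ n ∈ N, (∃ x : Q, n x = x) → n = 1) :
    (∀ a b : Q, QL b * (QL a)⁻¹ ∈ N ↔ ∃ n ∈ N, n a = b) ∧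
      (∀ a : Q,
        Set.BijOn (fun n : Equiv.Perm Q => QL (n a) * (QL a)⁻¹)
          (N : Set (Equiv.Perm Q)) (N : Set (Equiv.Perm Q))) := by
  have hQLfaith : ∀ a b : Q, QL a = QL b → a = b := fun a b h => hfaith h
  -- the map formula
  have hform : ∀ a : Q, ∀ n ∈ N, QL (n a) * (QL a)⁻¹ = n * (QL a * n⁻¹ * (QL a)⁻¹) := by
    intro a n hn
    rw [dis_conj n (hsub hn) a]
    group
  have hmaps : ∀ a : Q, Set.MapsTo (fun n : Equiv.Perm Q => QL (n a) * (QL a)⁻¹)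
      (N : Set (Equiv.Perm Q)) (N : Set (Equiv.Perm Q)) := by
    intro a n hn
    simp only [SetLike.mem_coe] at hn ⊢
    rw [hform a n hn]
    exact N.mul_mem hn (hnorm a n⁻¹ (N.inv_mem hn))
  have hinjOn : ∀ a : Q, Set.InjOn (fun n : Equiv.Perm Q => QL (n a) * (QL a)⁻¹)
      (N : Set (Equiv.Perm Q)) := by
    intro a n hn m hm h
    simp only at h
    have h2 : QL (n a) = QL (m a) := mul_right_cancel h
    have h3 : n a = m a := hQLfaith _ _ h2
    have h4 : m⁻¹ * n ∈ N := N.mul_mem (N.inv_mem hm) hn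
    have h5 : (m⁻¹ * n) a = a := by
      have : (m⁻¹ * n) a = m⁻¹ (n a) := rfl
      rw [this, h3, show m⁻¹ (m a) = a from Equiv.symm_apply_apply _ _]
    have h6 := hsemireg _ h4 ⟨a, h5⟩
    have : m * (m⁻¹ * n) = m * 1 := by rw [h6]
    rwa [← mul_assoc, mul_inv_cancel, one_mul, mul_one] at this
  have hfin : (N : Set (Equiv.Perm Q)).Finite := Set.toFinite _
  have hbij : ∀ a : Q, Set.BijOn (fun n : Equiv.Perm Q => QL (n a) * (QL a)⁻¹)
      (N : Set (Equiv.Perm Q)) (N : Set (Equiv.Perm Q)) := by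
    intro a
    exact (Set.Finite.injOn_iff_bijOn_of_mapsTo hfin (hmaps a)).mp (hinjOn a)
  refine ⟨?_, hbij⟩
  intro a b
  constructor
  · intro hg
    obtain ⟨n, hn, heq⟩ := (hbij a).surjOn hg
    refine ⟨n, hn, ?_⟩
    simp only at heq
    exact hQLfaith _ _ (mul_right_cancel heq)
  · rintro ⟨n, hn, rfl⟩
    exact hmaps a hn
end

section
/- Let Q be a finite connected quandle. Then Q is affine if and only if the cardinality of the center of the group Dis(Q) equals the cardinality of Q. -/
open Quandles

universe u

/-- A quandle is affine if it is isomorphic to `Aff(A, f)` for some abelian group `A`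
and automorphism `f` of `A`. -/
def IsAffine (Q : Type u) [Quandle Q] : Prop :=
  ∃ (A : Type u) (_ : AddCommGroup A) (f : A ≃+ A) (e : Q ≃ A),
    ∀ x y : Q, e (x ◃ y) = e x - f (e x) + f (e y)

theorem Equiv.Perm.apply_inv_self {α : Type*} (f : Equiv.Perm α) (x : α) : f (f⁻¹ x) = x :=
  Equiv.apply_symm_apply f x

theorem Equiv.Perm.inv_apply_self {α : Type*} (f : Equiv.Perm α) (x : α) : f⁻¹ (f x) = x :=
  Equiv.symm_apply_apply f x

section Aux

variable {Q : Type u} [Quandle Q]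

@[simp] lemma QL_apply (a b : Q) : QL a b = a ◃ b := rfl

/-- The subgroup of permutations that are quandle homomorphisms. -/
def QAut (Q : Type u) [Quandle Q] : Subgroup (Equiv.Perm Q) where
  carrier := {g | ∀ a b : Q, g (a ◃ b) = g a ◃ g b}
  one_mem' := fun _ _ => rfl
  mul_mem' := by
    intro g h hg hh a b
    simp only [Equiv.Perm.mul_apply]
    rw [hh, hg]
  inv_mem' := by
    intro g hg a b
    apply g.injective
    rw [Equiv.Perm.apply_inv_self, hg, Equiv.Perm.apply_inv_self, Equiv.Perm.apply_inv_self]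

lemma mem_QAut_iff {g : Equiv.Perm Q} : g ∈ QAut Q ↔ ∀ a b : Q, g (a ◃ b) = g a ◃ g b :=
  Iff.rfl

lemma QL_mem_QAut (a : Q) : QL a ∈ QAut Q := fun _ _ => Shelf.self_distrib

lemma Dis_le_QAut : Dis Q ≤ QAut Q := by
  rw [Dis, Subgroup.closure_le]
  rintro g ⟨a, b, rfl⟩
  exact mul_mem (QL_mem_QAut a) (inv_mem (QL_mem_QAut b))

lemma conj_QL {g : Equiv.Perm Q} (hg : g ∈ QAut Q) (a : Q) :
    g * QL a * g⁻¹ = QL (g a) := by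
  ext b
  simp only [Equiv.Perm.mul_apply, QL_apply]
  rw [mem_QAut_iff.mp hg a (g⁻¹ b), Equiv.Perm.apply_inv_self]

lemma conj_mem_Dis {g : Equiv.Perm Q} (hg : g ∈ QAut Q)
    {d : Equiv.Perm Q} (hd : d ∈ Dis Q) : g * d * g⁻¹ ∈ Dis Q := by
  refine Subgroup.closure_induction ?_ ?_ ?_ ?_ hd
  · rintro x ⟨a, b, rfl⟩
    have h : g * (QL a * (QL b)⁻¹) * g⁻¹ =
        (g * QL a * g⁻¹) * (g * QL b * g⁻¹)⁻¹ := by group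
    rw [h, conj_QL hg, conj_QL hg]
    exact Subgroup.subset_closure ⟨g a, g b, rfl⟩
  · simpa using (Dis Q).one_mem
  · intro x y _ _ px py
    have h : g * (x * y) * g⁻¹ = (g * x * g⁻¹) * (g * y * g⁻¹) := by group
    rw [h]; exact mul_mem px py
  · intro x _ px
    have h : g * x⁻¹ * g⁻¹ = (g * x * g⁻¹)⁻¹ := by group
    rw [h]; exact inv_mem px

/-- If an element commutes with everything in `Dis Q` and fixes a point, it is the identity
(assuming connectedness). -/
lemma fix_eq_one (hconn : ∀ x y : Q, ∃ g ∈ Dis Q, g x = y)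
    {z : ↥(Dis Q)} (hz : ∀ g : ↥(Dis Q), g * z = z * g)
    {x : Q} (hx : (z : Equiv.Perm Q) x = x) : z = 1 := by
  refine Subtype.ext (Equiv.ext fun y => ?_)
  obtain ⟨g, hg, rfl⟩ := hconn x y
  have h := congrArg (fun p : ↥(Dis Q) => (p : Equiv.Perm Q) x) (hz ⟨g, hg⟩)
  simp only [Subgroup.coe_mul, Equiv.Perm.mul_apply, hx] at h
  simpa using h.symm

lemma dis_bijective (hconn : ∀ x y : Q, ∃ g ∈ Dis Q, g x = y) {x0 : Q}
    (hfree : ∀ z : ↥(Dis Q), (z : Equiv.Perm Q) x0 = x0 → z = 1) :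
    Function.Bijective (fun g : ↥(Dis Q) => (g : Equiv.Perm Q) x0) := by
  constructor
  · intro g h hgh
    have h1 : ((h⁻¹ * g : ↥(Dis Q)) : Equiv.Perm Q) x0 = x0 := by
      simp only [Subgroup.coe_mul, Subgroup.coe_inv, Equiv.Perm.mul_apply] at hgh ⊢
      rw [hgh, Equiv.Perm.inv_apply_self]
    have h2 := hfree _ h1
    rwa [inv_mul_eq_one, eq_comm] at h2
  · intro y
    obtain ⟨g, hg, hgy⟩ := hconn x0 y
    exact ⟨⟨g, hg⟩, hgy⟩

/-- Conjugation by `QL c` as an automorphism of `Dis Q`. -/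
def conjEquiv (c : Q) : ↥(Dis Q) ≃* ↥(Dis Q) where
  toFun d := ⟨QL c * ↑d * (QL c)⁻¹, conj_mem_Dis (QL_mem_QAut c) d.2⟩
  invFun d := ⟨(QL c)⁻¹ * ↑d * QL c, by
    simpa using conj_mem_Dis (inv_mem (QL_mem_QAut c)) d.2⟩
  left_inv d := by
    apply Subtype.ext
    show (QL c)⁻¹ * (QL c * ↑d * (QL c)⁻¹) * QL c = ↑d
    group
  right_inv d := by
    apply Subtype.ext
    show QL c * ((QL c)⁻¹ * ↑d * QL c) * (QL c)⁻¹ = ↑d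
    group
  map_mul' d e := by
    apply Subtype.ext
    show QL c * (↑d * ↑e) * (QL c)⁻¹ =
      (QL c * ↑d * (QL c)⁻¹) * (QL c * ↑e * (QL c)⁻¹)
    group

@[simp] lemma conjEquiv_coe (c : Q) (d : ↥(Dis Q)) :
    (conjEquiv c d : Equiv.Perm Q) = QL c * ↑d * (QL c)⁻¹ := rfl

end Aux

theorem stmt9 (Q : Type u) [Quandle Q] [Finite Q]
    (hconn : ∀ x y : Q, ∃ g ∈ Dis Q, g x = y) :
    IsAffine Q ↔ Nat.card (Subgroup.center ↥(Dis Q)) = Nat.card Q := by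
  constructor
  · rintro ⟨A, _, f, e, he⟩
    -- every element of `Dis Q` is a translation through `e`
    have hT : ∀ g ∈ Dis Q, ∃ t : A, ∀ x : Q, e (g x) = t + e x := by
      intro g hg
      refine Subgroup.closure_induction ?_ ?_ ?_ ?_ hg
      · rintro x ⟨a, b, rfl⟩
        refine ⟨e a - f (e a) + (f (e b) - e b), fun x => ?_⟩
        have h1 : b ◃ ((QL b)⁻¹ x) = x := Equiv.Perm.apply_inv_self (QL b) x
        have h2 : e x = e b - f (e b) + f (e ((QL b)⁻¹ x)) := by
          conv_lhs => rw [← h1]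
          exact he b _
        have h3 : e ((QL a * (QL b)⁻¹) x) = e a - f (e a) + f (e ((QL b)⁻¹ x)) := he a _
        rw [h3, h2]; abel
      · exact ⟨0, fun x => by simp⟩
      · rintro x y _ _ ⟨s, hs⟩ ⟨t, ht⟩
        refine ⟨s + t, fun z => ?_⟩
        have : e ((x * y) z) = s + e (y z) := hs (y z)
        rw [this, ht]; abel
      · rintro x _ ⟨s, hs⟩
        refine ⟨-s, fun z => ?_⟩
        have h := hs (x⁻¹ z)
        rw [Equiv.Perm.apply_inv_self] at h
        rw [h]; abel
    have hcomm : ∀ a b : ↥(Dis Q), a * b = b * a := by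
      intro a b
      obtain ⟨s, hs⟩ := hT a a.2
      obtain ⟨t, ht⟩ := hT b b.2
      refine Subtype.ext (Equiv.ext fun x => ?_)
      apply e.injective
      simp only [Subgroup.coe_mul, Equiv.Perm.mul_apply, hs, ht]
      abel
    have hne : Nonempty Q := ⟨e.symm 0⟩
    obtain ⟨x0⟩ := hne
    have hfree : ∀ z : ↥(Dis Q), (z : Equiv.Perm Q) x0 = x0 → z = 1 :=
      fun z hz => fix_eq_one hconn (fun g => hcomm g z) hz
    have hcards : Nat.card ↥(Dis Q) = Nat.card Q :=
      Nat.card_eq_of_bijective _ (dis_bijective hconn hfree)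
    have hctr : Subgroup.center ↥(Dis Q) = ⊤ := by
      rw [Subgroup.eq_top_iff']
      intro z
      exact Subgroup.mem_center_iff.mpr fun g => hcomm g z
    rw [hctr, Subgroup.card_top, hcards]
  · intro hcard
    have hne : Nonempty Q := by
      by_contra h
      rw [not_nonempty_iff] at h
      have h0 : Nat.card Q = 0 := by simp [Nat.card_eq_zero_of_infinite, Nat.card_of_isEmpty]
      have hpos : 0 < Nat.card (Subgroup.center ↥(Dis Q)) := Nat.card_pos
      omega
    obtain ⟨x0⟩ := hne
    -- the center acts freely, hence (by cardinality) transitively at each point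
    have hcbij : ∀ x : Q, Function.Bijective
        (fun z : ↥(Subgroup.center ↥(Dis Q)) => ((z : ↥(Dis Q)) : Equiv.Perm Q) x) := by
      intro x
      rw [Nat.bijective_iff_injective_and_card]
      refine ⟨?_, hcard⟩
      intro z w h
      have h' : ((z : ↥(Dis Q)) : Equiv.Perm Q) x = ((w : ↥(Dis Q)) : Equiv.Perm Q) x := h
      have h1 : (((w⁻¹ * z : ↥(Subgroup.center ↥(Dis Q))) : ↥(Dis Q)) : Equiv.Perm Q) x = x := by
        simp only [Subgroup.coe_mul, Subgroup.coe_inv, Equiv.Perm.mul_apply]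
        rw [h', Equiv.Perm.inv_apply_self]
      have h2 : ((w⁻¹ * z : ↥(Subgroup.center ↥(Dis Q))) : ↥(Dis Q)) = 1 :=
        fix_eq_one hconn (fun g => Subgroup.mem_center_iff.mp (w⁻¹ * z).2 g) h1
      have h3 : w⁻¹ * z = 1 := Subtype.ext h2
      rw [inv_mul_eq_one] at h3
      exact h3.symm
    -- Dis Q acts freely
    have hdisfree : ∀ (x : Q) (g : ↥(Dis Q)), (g : Equiv.Perm Q) x = x → g = 1 := by
      intro x g hx
      refine Subtype.ext (Equiv.ext fun y => ?_)
      obtain ⟨z, rfl⟩ := (hcbij x).surjective y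
      have hzc := Subgroup.mem_center_iff.mp z.2 g
      have h := congrArg (fun p : ↥(Dis Q) => (p : Equiv.Perm Q) x) hzc
      simp only [Subgroup.coe_mul, Equiv.Perm.mul_apply, hx] at h
      simpa using h
    have hDbij : Function.Bijective (fun g : ↥(Dis Q) => (g : Equiv.Perm Q) x0) :=
      dis_bijective hconn (hdisfree x0)
    have hDcard : Nat.card ↥(Dis Q) = Nat.card Q := Nat.card_eq_of_bijective _ hDbij
    have hctr : Subgroup.center ↥(Dis Q) = ⊤ :=
      Subgroup.eq_top_of_card_eq _ (by rw [hcard, hDcard])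
    have hcomm : ∀ a b : ↥(Dis Q), a * b = b * a := by
      intro a b
      exact Subgroup.mem_center_iff.mp (hctr.symm ▸ Subgroup.mem_top b) a
    letI : CommGroup ↥(Dis Q) :=
      { (inferInstance : Group ↥(Dis Q)) with mul_comm := hcomm }
    set κ : ↥(Dis Q) ≃* ↥(Dis Q) := conjEquiv x0 with hκ
    set ψ : ↥(Dis Q) ≃ Q := Equiv.ofBijective _ hDbij with hψ
    refine ⟨Additive ↥(Dis Q), Additive.addCommGroup, MulEquiv.toAdditive κ,
      ψ.symm.trans Additive.ofMul, ?_⟩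
    intro x y
    obtain ⟨g, rfl⟩ := ψ.surjective x
    obtain ⟨h, rfl⟩ := ψ.surjective y
    have hinv : (QL x0)⁻¹ x0 = x0 := by
      rw [Equiv.Perm.inv_def, Equiv.symm_apply_eq]
      exact Quandle.fix.symm
    have key : ψ.symm (ψ g ◃ ψ h) = g * (κ g)⁻¹ * κ h := by
      apply ψ.injective
      rw [Equiv.apply_symm_apply]
      have hcoe : ((g * (κ g)⁻¹ * κ h : ↥(Dis Q)) : Equiv.Perm Q) =
          ↑g * QL x0 * (↑g)⁻¹ * ↑h * (QL x0)⁻¹ := by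
        simp only [Subgroup.coe_mul, Subgroup.coe_inv, hκ, conjEquiv_coe]
        group
      have hpsi : ∀ d : ↥(Dis Q), ψ d = (d : Equiv.Perm Q) x0 := fun d => rfl
      rw [hpsi, hpsi, hpsi, hcoe]
      have hQLg : QL ((g : Equiv.Perm Q) x0) = ↑g * QL x0 * (↑g)⁻¹ :=
        (conj_QL (Dis_le_QAut g.2) x0).symm
      calc ((g : Equiv.Perm Q) x0) ◃ ((h : Equiv.Perm Q) x0)
          = QL ((g : Equiv.Perm Q) x0) ((h : Equiv.Perm Q) x0) := rfl
        _ = (↑g * QL x0 * (↑g)⁻¹) ((h : Equiv.Perm Q) x0) := by rw [hQLg]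
        _ = (↑g * QL x0 * (↑g)⁻¹ * ↑h * (QL x0)⁻¹) x0 := by
            simp only [Equiv.Perm.mul_apply, hinv]
    simp only [Equiv.trans_apply, Equiv.symm_apply_apply, key]
    show Additive.ofMul (g * (κ g)⁻¹ * κ h) =
      Additive.ofMul g - Additive.ofMul (κ g) + Additive.ofMul (κ h)
    rw [ofMul_mul, ofMul_mul, ofMul_inv, sub_eq_add_neg]
end
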